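/- Let f ∈ ℂ[x_1,x_2,x_3] be a homogeneous polynomial of degree 3 such that H(f) = α·x_1x_2x_3 for some nonzero α ∈ ℂ. Then either f = a_1x_1^3 + a_2x_2^3 + a_3x_3^3 with a_1a_2a_3 ≠ 0, or f = a·x_1x_2x_3 with a ≠ 0. -/

import Mathlib

open MvPolynomial

/-- The Hessian determinant of a multivariate polynomial. -/
noncomputable def hessDet {n : ℕ} (f : MvPolynomial (Fin n) ℂ) : MvPolynomial (Fin n) ℂ :=
  Matrix.det (Matrix.of fun i j => pderiv i (pderiv j f))

/-!
The Hessian of a ternary cubic is again a ternary cubic, whose ten coefficients are explicit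
cubic forms in the ten coefficients of `f`. Comparing them with those of `α·x₀x₁x₂`, suitable
combinations of the coefficient equations give `α·d = 0` for each of the six mixed coefficients
`d` (those of `x_i²x_j`), so `f = a x₀³ + b x₁³ + c x₂³ + t x₀x₁x₂`. The Hessian of such an `f` is
`-6t²(a x₀³ + b x₁³ + c x₂³) + (216abc + 2t³) x₀x₁x₂`, hence either `t = 0` and `α = 216abc`, or
`a = b = c = 0` and `f = t x₀x₁x₂`.
-/

noncomputable def fin3Exp (i j k : ℕ) : Fin 3 →₀ ℕ :=
  Finsupp.single 0 i + Finsupp.single 1 j + Finsupp.single 2 k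

lemma fin3Exp_inj {i j k i' j' k' : ℕ} :
    fin3Exp i j k = fin3Exp i' j' k' ↔ i = i' ∧ j = j' ∧ k = k' := by
  refine ⟨fun h => ?_, by rintro ⟨rfl, rfl, rfl⟩; rfl⟩
  simpa [fin3Exp] using
    And.intro (DFunLike.congr_fun h 0) (And.intro (DFunLike.congr_fun h 1) (DFunLike.congr_fun h 2))

lemma exists_eq_fin3Exp (m : Fin 3 →₀ ℕ) : ∃ i j k, m = fin3Exp i j k :=
  ⟨m 0, m 1, m 2, by ext x; fin_cases x <;> simp [fin3Exp]⟩

lemma degree_fin3Exp (i j k : ℕ) : (fin3Exp i j k).degree = i + j + k := by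
  simp [fin3Exp]

lemma monomial_fin3Exp {R : Type*} [CommSemiring R] (i j k : ℕ) (a : R) :
    monomial (fin3Exp i j k) a = C a * X 0 ^ i * X 1 ^ j * X 2 ^ k := by
  simp only [X_pow_eq_monomial, C_mul_monomial, monomial_mul, fin3Exp, mul_one]

section TernaryCubic

variable {R : Type*} [CommSemiring R]

noncomputable def ternaryCubic (a b c d e p q r s t : R) : MvPolynomial (Fin 3) R :=
  C a * X 0 ^ 3 + C b * X 1 ^ 3 + C c * X 2 ^ 3 + C d * X 0 ^ 2 * X 1 + C e * X 0 ^ 2 * X 2 +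
    C p * X 0 * X 1 ^ 2 + C q * X 1 ^ 2 * X 2 + C r * X 0 * X 2 ^ 2 + C s * X 1 * X 2 ^ 2 +
    C t * X 0 * X 1 * X 2

lemma ternaryCubic_eq_sum_monomial (a b c d e p q r s t : R) :
    ternaryCubic a b c d e p q r s t =
      monomial (fin3Exp 3 0 0) a + monomial (fin3Exp 0 3 0) b + monomial (fin3Exp 0 0 3) c +
        monomial (fin3Exp 2 1 0) d + monomial (fin3Exp 2 0 1) e + monomial (fin3Exp 1 2 0) p +
        monomial (fin3Exp 0 2 1) q + monomial (fin3Exp 1 0 2) r + monomial (fin3Exp 0 1 2) s +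
        monomial (fin3Exp 1 1 1) t := by
  simp only [ternaryCubic, monomial_fin3Exp, pow_zero, pow_one, mul_one]

lemma isHomogeneous_ternaryCubic (a b c d e p q r s t : R) :
    (ternaryCubic a b c d e p q r s t).IsHomogeneous 3 := by
  rw [ternaryCubic_eq_sum_monomial]
  repeat' apply IsHomogeneous.add
  all_goals exact isHomogeneous_monomial _ (by simp [degree_fin3Exp])

lemma coeff_ternaryCubic (a b c d e p q r s t : R) :
    coeff (fin3Exp 3 0 0) (ternaryCubic a b c d e p q r s t) = a ∧
    coeff (fin3Exp 0 3 0) (ternaryCubic a b c d e p q r s t) = b ∧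
    coeff (fin3Exp 0 0 3) (ternaryCubic a b c d e p q r s t) = c ∧
    coeff (fin3Exp 2 1 0) (ternaryCubic a b c d e p q r s t) = d ∧
    coeff (fin3Exp 2 0 1) (ternaryCubic a b c d e p q r s t) = e ∧
    coeff (fin3Exp 1 2 0) (ternaryCubic a b c d e p q r s t) = p ∧
    coeff (fin3Exp 0 2 1) (ternaryCubic a b c d e p q r s t) = q ∧
    coeff (fin3Exp 1 0 2) (ternaryCubic a b c d e p q r s t) = r ∧
    coeff (fin3Exp 0 1 2) (ternaryCubic a b c d e p q r s t) = s ∧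
    coeff (fin3Exp 1 1 1) (ternaryCubic a b c d e p q r s t) = t := by
  simp [ternaryCubic_eq_sum_monomial, coeff_monomial, fin3Exp_inj]

theorem MvPolynomial.IsHomogeneous.exists_eq_ternaryCubic
    {f : MvPolynomial (Fin 3) R} (hf : f.IsHomogeneous 3) :
    ∃ a b c d e p q r s t : R, f = ternaryCubic a b c d e p q r s t := by
  refine ⟨coeff (fin3Exp 3 0 0) f, coeff (fin3Exp 0 3 0) f, coeff (fin3Exp 0 0 3) f,
    coeff (fin3Exp 2 1 0) f, coeff (fin3Exp 2 0 1) f, coeff (fin3Exp 1 2 0) f,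
    coeff (fin3Exp 0 2 1) f, coeff (fin3Exp 1 0 2) f, coeff (fin3Exp 0 1 2) f,
    coeff (fin3Exp 1 1 1) f, ?_⟩
  ext m
  obtain ⟨i, j, k, rfl⟩ := exists_eq_fin3Exp m
  by_cases hdeg : i + j + k = 3
  · obtain rfl : k = 3 - i - j := by omega
    have : i ≤ 3 := by omega
    have : j ≤ 3 - i := by omega
    interval_cases i <;> interval_cases j <;> simp [coeff_ternaryCubic]
  · rw [hf.coeff_eq_zero, (isHomogeneous_ternaryCubic ..).coeff_eq_zero] <;>
      rwa [degree_fin3Exp]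

lemma ternaryCubic_inj {a b c d e p q r s t a' b' c' d' e' p' q' r' s' t' : R} :
    ternaryCubic a b c d e p q r s t = ternaryCubic a' b' c' d' e' p' q' r' s' t' ↔
      a = a' ∧ b = b' ∧ c = c' ∧ d = d' ∧ e = e' ∧ p = p' ∧ q = q' ∧ r = r' ∧ s = s' ∧
        t = t' := by
  refine ⟨fun h => ?_, by rintro ⟨rfl, rfl, rfl, rfl, rfl, rfl, rfl, rfl, rfl, rfl⟩; rfl⟩
  obtain ⟨ha, hb, hc, hd, he, hp, hq, hr, hs, ht⟩ := coeff_ternaryCubic a b c d e p q r s t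
  rw [h] at ha hb hc hd he hp hq hr hs ht
  obtain ⟨ha', hb', hc', hd', he', hp', hq', hr', hs', ht'⟩ :=
    coeff_ternaryCubic a' b' c' d' e' p' q' r' s' t'
  exact ⟨ha ▸ ha', hb ▸ hb', hc ▸ hc', hd ▸ hd', he ▸ he', hp ▸ hp', hq ▸ hq', hr ▸ hr',
    hs ▸ hs', ht ▸ ht'⟩

lemma C_mul_X_mul_X_mul_X_eq_ternaryCubic (α : R) :
    C α * (X 0 * X 1 * X 2) = ternaryCubic 0 0 0 0 0 0 0 0 0 α := by
  simp only [ternaryCubic, map_zero, zero_mul, zero_add, mul_assoc]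

lemma pderiv_pderiv_ternaryCubic (a b c d e p q r s t : R) :
    (Matrix.of fun i j => pderiv i (pderiv j (ternaryCubic a b c d e p q r s t))) =
      !![C (6 * a) * X 0 + C (2 * d) * X 1 + C (2 * e) * X 2,
          C (2 * d) * X 0 + C (2 * p) * X 1 + C t * X 2,
          C (2 * e) * X 0 + C t * X 1 + C (2 * r) * X 2;
        C (2 * d) * X 0 + C (2 * p) * X 1 + C t * X 2,
          C (2 * p) * X 0 + C (6 * b) * X 1 + C (2 * q) * X 2,
          C t * X 0 + C (2 * q) * X 1 + C (2 * s) * X 2;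
        C (2 * e) * X 0 + C t * X 1 + C (2 * r) * X 2,
          C t * X 0 + C (2 * q) * X 1 + C (2 * s) * X 2,
          C (2 * r) * X 0 + C (2 * s) * X 1 + C (6 * c) * X 2] := by
  ext i j : 1
  fin_cases i <;> fin_cases j <;>
    simp only [Matrix.of_apply, Matrix.cons_val', Matrix.cons_val_zero, Matrix.cons_val_one,
      Matrix.cons_val, Matrix.cons_val_fin_one, Fin.zero_eta, Fin.mk_one, Fin.reduceFinMk,
      Fin.isValue, ternaryCubic, map_add, pderiv_C, pderiv_mul, pderiv_pow, pderiv_X,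
      Pi.single_apply, Fin.reduceEq, ↓reduceIte, map_zero, Derivation.map_one_eq_zero,
      Derivation.map_natCast, Nat.reduceSub, map_ofNat, map_mul] <;> ring

end TernaryCubic

lemma hessDet_ternaryCubic (a b c d e p q r s t : ℂ) :
    hessDet (ternaryCubic a b c d e p q r s t) = ternaryCubic
      (24*a*p*r - 6*a*t^2 - 8*d^2*r + 8*d*e*t - 8*e^2*p)
      (24*b*d*s - 6*b*t^2 - 8*d*q^2 - 8*p^2*s + 8*p*q*t)
      (24*c*e*q - 6*c*t^2 - 8*e*s^2 - 8*q*r^2 + 8*r*s*t)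
      (72*a*b*r + 24*a*p*s - 24*a*q*t - 24*b*e^2 - 8*d^2*s + 16*d*e*q - 8*d*p*r + 2*d*t^2)
      (72*a*c*p + 24*a*q*r - 24*a*s*t - 24*c*d^2 + 16*d*e*s - 8*e^2*q - 8*e*p*r + 2*e*t^2)
      (72*a*b*s - 24*a*q^2 + 24*b*d*r - 24*b*e*t - 8*d*p*s + 16*e*p*q - 8*p^2*r + 2*p*t^2)
      (72*b*c*d + 24*b*e*s - 24*b*r*t - 24*c*p^2 - 8*d*q*s - 8*e*q^2 + 16*p*q*r + 2*q*t^2)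
      (72*a*c*q - 24*a*s^2 - 24*c*d*t + 24*c*e*p + 16*d*r*s - 8*e*q*r - 8*p*r^2 + 2*r*t^2)
      (72*b*c*e - 24*b*r^2 + 24*c*d*q - 24*c*p*t - 8*d*s^2 - 8*e*q*s + 16*p*r*s + 2*s*t^2)
      (216*a*b*c - 24*a*q*s - 24*b*e*r - 24*c*d*p + 24*d*q*r - 8*d*s*t + 24*e*p*s - 8*e*q*t
        - 8*p*r*t + 2*t^3) := by
  rw [hessDet, pderiv_pderiv_ternaryCubic, Matrix.det_fin_three]
  simp only [Matrix.of_apply, Matrix.cons_val', Matrix.cons_val_zero, Matrix.cons_val_one,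
    Matrix.cons_val_two, Matrix.empty_val', Matrix.cons_val_fin_one, Matrix.vecHead,
    Matrix.vecTail, Function.comp_apply, Fin.succ_zero_eq_one, ternaryCubic, map_add, map_sub,
    map_mul, map_pow, map_ofNat]
  ring

lemma ternaryCubic_coeffs_of_hessDet_eq {a b c d e p q r s t α : ℂ} (hα : α ≠ 0)
    (hH : hessDet (ternaryCubic a b c d e p q r s t) = C α * (X 0 * X 1 * X 2)) :
    d = 0 ∧ e = 0 ∧ p = 0 ∧ q = 0 ∧ r = 0 ∧ s = 0 ∧
      a * t ^ 2 = 0 ∧ b * t ^ 2 = 0 ∧ c * t ^ 2 = 0 ∧ 216 * (a * b * c) + 2 * t ^ 3 = α := by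
  rw [hessDet_ternaryCubic, C_mul_X_mul_X_mul_X_eq_ternaryCubic, ternaryCubic_inj] at hH
  obtain ⟨h300, h030, h003, h210, h201, h120, h021, h102, h012, h111⟩ := hH
  have of_mul_α : ∀ x, α * x = 0 → x = 0 := fun x hx => (mul_eq_zero.mp hx).resolve_left hα
  have hd := of_mul_α d <| by
    linear_combination (-3*q)*h300 + t*h210 + p*h201 - e*h120 + (3*a)*h021 - d*h111
  have he := of_mul_α e <| by
    linear_combination (-3*s)*h300 + r*h210 + t*h201 - d*h102 + (3*a)*h012 - e*h111
  have hp := of_mul_α p <| by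
    linear_combination (-q)*h210 + (3*b)*h201 + t*h120 - (3*e)*h030 + d*h021 - p*h111
  have hq := of_mul_α q <| by
    linear_combination s*h120 + (3*b)*h102 - (3*r)*h030 + t*h021 - p*h012 - q*h111
  have hr := of_mul_α r <| by
    linear_combination (3*c)*h210 - s*h201 + t*h102 + e*h012 - (3*d)*h003 - r*h111
  have hs := of_mul_α s <| by
    linear_combination (3*c)*h120 + q*h102 - r*h021 + t*h012 - (3*p)*h003 - s*h111
  subst hd he hp hq hr hs
  exact ⟨rfl, rfl, rfl, rfl, rfl, rfl, by linear_combination (-1/6) * h300,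
    by linear_combination (-1/6) * h030, by linear_combination (-1/6) * h003,
    by linear_combination h111⟩

theorem ternary_cubic_classification (f : MvPolynomial (Fin 3) ℂ) (hf : f.IsHomogeneous 3)
    (α : ℂ) (hα : α ≠ 0) (hH : hessDet f = C α * (X 0 * X 1 * X 2)) :
    (∃ a₁ a₂ a₃ : ℂ, a₁ * a₂ * a₃ ≠ 0 ∧
        f = C a₁ * X 0 ^ 3 + C a₂ * X 1 ^ 3 + C a₃ * X 2 ^ 3) ∨
    (∃ a : ℂ, a ≠ 0 ∧ f = C a * (X 0 * X 1 * X 2)) := by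
  obtain ⟨a, b, c, d, e, p, q, r, s, t, rfl⟩ := hf.exists_eq_ternaryCubic
  obtain ⟨rfl, rfl, rfl, rfl, rfl, rfl, hat, hbt, hct, hα_eq⟩ :=
    ternaryCubic_coeffs_of_hessDet_eq hα hH
  rcases eq_or_ne t 0 with rfl | ht
  · refine .inl ⟨a, b, c, fun habc => hα ?_, by simp [ternaryCubic]⟩
    rw [← hα_eq, habc]
    ring
  · have ht2 : t ^ 2 ≠ 0 := pow_ne_zero 2 ht
    obtain ⟨rfl, rfl, rfl⟩ : a = 0 ∧ b = 0 ∧ c = 0 :=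
      ⟨(mul_eq_zero.mp hat).resolve_right ht2, (mul_eq_zero.mp hbt).resolve_right ht2,
        (mul_eq_zero.mp hct).resolve_right ht2⟩
    exact .inr ⟨t, ht, by simp [ternaryCubic, mul_assoc]⟩
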